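/- Weak subtyping is contained in subtyping: if A <: B then A ≤ B. -/
import Mathlib

inductive STy (σ : Type) : Type
  | base : σ → STy σ
  | next : STy σ → STy σ
  | box  : STy σ → STy σ
  | dia  : STy σ → STy σ

variable {σ : Type}

def shiftL1 : STy σ → Option (STy σ)
  | .next A => some A
  | .box A  => some (.box A)
  | _ => none

def shiftR1 : STy σ → Option (STy σ)
  | .next A => some A
  | .dia A  => some (.dia A)
  | _ => none

def shiftL : STy σ → ℕ → Option (STy σ)
  | A, 0 => some A
  | A, t+1 => (shiftL A t).bind shiftL1

def shiftR : STy σ → ℕ → Option (STy σ)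
  | A, 0 => some A
  | A, t+1 => (shiftR A t).bind shiftR1

inductive TSub : STy σ → STy σ → Prop
  | refl (A) : TSub A A
  | nextNext {A B} : TSub A B → TSub (.next A) (.next B)
  | boxNext {A B} : TSub (.box A) B → TSub (.box A) (.next B)
  | nextDia {A B} : TSub A (.dia B) → TSub (.next A) (.dia B)
  | boxR {A B} (n : ℕ) : TSub (STy.next^[n] (.box A)) B → TSub (STy.next^[n] (.box A)) (.box B)
  | boxL {A B} : TSub A B → TSub (.box A) B
  | diaR {A B} : TSub A B → TSub A (.dia B)
  | diaL {A B} (n : ℕ) : TSub A (STy.next^[n] (.dia B)) → TSub (.dia A) (STy.next^[n] (.dia B))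

inductive WTSub : STy σ → STy σ → Prop
  | refl (A) : WTSub A A
  | boxWeak {A} {m n : ℕ} : m ≤ n → WTSub (STy.next^[m] (.box A)) (STy.next^[n] (.box A))
  | diaWeak {A} {m n : ℕ} : m ≥ n → WTSub (STy.next^[m] (.dia A)) (STy.next^[n] (.dia A))

lemma tsub_next_iter {A B : STy σ} (m : ℕ) (h : TSub A B) :
    TSub (STy.next^[m] A) (STy.next^[m] B) := by
  induction m with
  | zero => exact h
  | succ k ih =>
    simp only [Function.iterate_succ_apply']
    exact TSub.nextNext ih

lemma tsub_box_next (A : STy σ) (k : ℕ) : TSub (.box A) (STy.next^[k] (.box A)) := by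
  induction k with
  | zero => exact TSub.refl _
  | succ k ih =>
    simp only [Function.iterate_succ_apply']
    exact TSub.boxNext ih

lemma tsub_next_dia (A : STy σ) (k : ℕ) : TSub (STy.next^[k] (.dia A)) (.dia A) := by
  induction k with
  | zero => exact TSub.refl _
  | succ k ih =>
    simp only [Function.iterate_succ_apply']
    exact TSub.nextDia ih

theorem stmt14 (A B : STy σ) (h : WTSub A B) : TSub A B := by
  induction h with
  | refl A => exact TSub.refl A
  | @boxWeak A m n hmn =>
    obtain ⟨k, rfl⟩ := Nat.exists_eq_add_of_le hmn
    rw [Function.iterate_add_apply]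
    exact tsub_next_iter m (tsub_box_next A k)
  | @diaWeak A m n hmn =>
    obtain ⟨k, rfl⟩ := Nat.exists_eq_add_of_le hmn
    rw [Function.iterate_add_apply]
    exact tsub_next_iter n (tsub_next_dia A k)
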